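/- If two strings X and Y of equal length order-preserving match (i.e., for all indices i, j: X[i] ≤ X[j] iff Y[i] ≤ Y[j]), then CT(X) = CT(Y). The converse does not hold in general. -/

import Mathlib

open List

inductive Shape where
  | nil : Shape
  | node : Shape → Shape → Shape
deriving DecidableEq

inductive BTree (α : Type*) where
  | nil : BTree α
  | node : BTree α → α → BTree α → BTree α

def BTree.shape {α : Type*} : BTree α → Shape
  | .nil => .nil
  | .node l _ r => .node l.shape r.shape

def BTree.rootVal {α : Type*} : BTree α → Option α
  | .nil => none
  | .node _ v _ => some v

section
variable {α : Type*} [LinearOrder α] [Inhabited α]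

/-- Parent-distance value at 1-based position `i` of `S`. -/
def pdVal (S : List α) (i : ℕ) : ℕ :=
  let J := (Finset.Ico 1 i).filter (fun j => S.getD (j-1) default ≤ S.getD (i-1) default)
  if h : J.Nonempty then i - J.max' h else 0

/-- Parent-distance encoding of `S` (1-based positions). -/
def PD (S : List α) : List ℕ := (List.range S.length).map (fun k => pdVal S (k+1))

/-- 0-based index of the leftmost minimum of `S`. -/
def leftmostMinIdx (S : List α) : ℕ :=
  ((List.range S.length).argmin (fun j => S.getD j default)).getD 0

def CTaux : ℕ → List α → BTree α
  | 0, _ => .nil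
  | (n+1), S =>
    if S.isEmpty then .nil else
      let i := leftmostMinIdx S
      .node (CTaux n (S.take i)) (S.getD i default) (CTaux n (S.drop (i+1)))

/-- The (labeled) Cartesian tree of `S`. -/
def CT (S : List α) : BTree α := CTaux S.length S

/-- Front pointers of a sequence `u` of naturals (1-based positions `k ≥ 2` with `k - u[k] = 1`). -/
def frontPointers (u : List ℕ) : Finset ℕ :=
  (Finset.Icc 2 u.length).filter (fun k => k - u.getD (k-1) 0 = 1)

/-- `FP(S)[i]`: number of front pointers of `PD(S[i..])` (1-based `i`). -/
def FPval (S : List α) (i : ℕ) : ℕ := (frontPointers (PD (S.drop (i-1)))).card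

/-- The FP encoding of `S`. -/
def FP (S : List α) : List ℕ := (List.range S.length).map (fun k => FPval S (k+1))

end

/-!
The leftmost-minimum position of a string is determined by comparisons between its letters
alone, so op-matching strings are split at the same position; the two prefixes and the two
suffixes again op-match, and induction on the recursion depth of `CTaux` gives equal shapes.
For the converse, `[0, 1]` and `[0, 0]` both have a right path as Cartesian tree, but the two
letters compare strictly in the first string and equally in the second.
-/

theorem List.argmin_congr {γ β β' : Type*} [Preorder β] [DecidableLT β] [Preorder β']
    [DecidableLT β'] {f : γ → β} {g : γ → β'} {l : List γ}
    (h : ∀ a ∈ l, ∀ b ∈ l, f a ≤ f b ↔ g a ≤ g b) : l.argmin f = l.argmin g := by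
  induction l using List.reverseRecOn with
  | nil => rfl
  | append_singleton l a ih =>
    have hl : ∀ b ∈ l, b ∈ l ++ [a] := fun b hb => List.mem_append_left _ hb
    have ha : a ∈ l ++ [a] := by simp
    rw [List.argmin_concat, List.argmin_concat, ih fun b hb c hc => h b (hl b hb) c (hl c hc)]
    cases hc : l.argmin g with
    | none => rfl
    | some c =>
      have hcl := hl c (List.argmin_mem hc)
      have hlt : f a < f c ↔ g a < g c := by
        rw [lt_iff_le_not_ge, lt_iff_le_not_ge, h a ha c hcl, h c hcl a ha]
      simp only [hlt]

section

variable {α β : Type*} [LinearOrder α] [Inhabited α] [LinearOrder β] [Inhabited β]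

def OpMatch (X : List α) (Y : List β) : Prop :=
  X.length = Y.length ∧ ∀ i j, i < X.length → j < X.length →
    (X.getD i default ≤ X.getD j default ↔ Y.getD i default ≤ Y.getD j default)

namespace OpMatch

variable {X : List α} {Y : List β}

theorem take (h : OpMatch X Y) (k : ℕ) : OpMatch (X.take k) (Y.take k) := by
  refine ⟨by simp [h.1], fun i j hi hj => ?_⟩
  simp only [List.length_take, lt_min_iff] at hi hj
  simp only [List.getD_eq_getElem?_getD, List.getElem?_take, if_pos hi.1, if_pos hj.1]
  simpa only [List.getD_eq_getElem?_getD] using h.2 i j hi.2 hj.2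

theorem drop (h : OpMatch X Y) (k : ℕ) : OpMatch (X.drop k) (Y.drop k) := by
  refine ⟨by simp [h.1], fun i j hi hj => ?_⟩
  simp only [List.length_drop] at hi hj
  simp only [List.getD_eq_getElem?_getD, List.getElem?_drop]
  simpa only [List.getD_eq_getElem?_getD] using h.2 (k + i) (k + j) (by omega) (by omega)

theorem leftmostMinIdx_eq (h : OpMatch X Y) : leftmostMinIdx X = leftmostMinIdx Y := by
  unfold leftmostMinIdx
  rw [← h.1, List.argmin_congr fun i hi j hj => h.2 i j (List.mem_range.1 hi) (List.mem_range.1 hj)]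

theorem CTaux_shape_eq (n : ℕ) (h : OpMatch X Y) : (CTaux n X).shape = (CTaux n Y).shape := by
  induction n generalizing X Y with
  | zero => rfl
  | succ n ih =>
    have hempty : X.isEmpty = Y.isEmpty := by
      rw [Bool.eq_iff_iff, List.isEmpty_iff, List.isEmpty_iff, ← List.length_eq_zero_iff,
        ← List.length_eq_zero_iff, h.1]
    simp only [CTaux, hempty, h.leftmostMinIdx_eq]
    split
    · rfl
    · simp only [BTree.shape, ih (h.take _), ih (h.drop _)]

theorem CT_shape_eq (h : OpMatch X Y) : (CT X).shape = (CT Y).shape := by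
  rw [CT, CT, ← h.1]
  exact h.CTaux_shape_eq _

end OpMatch

end

/-- If two equal-length strings order-preserving match then their Cartesian trees
coincide; the converse fails in general. -/
theorem stmt4 {α β : Type*} [LinearOrder α] [Inhabited α] [LinearOrder β] [Inhabited β] :
    (∀ (X : List α) (Y : List β), X.length = Y.length →
      (∀ i j, 1 ≤ i → i ≤ X.length → 1 ≤ j → j ≤ X.length →
        (X.getD (i-1) default ≤ X.getD (j-1) default ↔
         Y.getD (i-1) default ≤ Y.getD (j-1) default)) →
      (CT X).shape = (CT Y).shape)
    ∧
    (∃ (X Y : List ℤ), X.length = Y.length ∧ (CT X).shape = (CT Y).shape ∧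
      ¬ (∀ i j, 1 ≤ i → i ≤ X.length → 1 ≤ j → j ≤ X.length →
        (X.getD (i-1) default ≤ X.getD (j-1) default ↔
         Y.getD (i-1) default ≤ Y.getD (j-1) default))) := by
  refine ⟨fun X Y hlen h => OpMatch.CT_shape_eq ⟨hlen, fun i j hi hj => ?_⟩, ?_⟩
  · simpa using h (i + 1) (j + 1) (by omega) (by omega) (by omega) (by omega)
  · refine ⟨[0, 1], [0, 0], rfl, by decide, fun h => ?_⟩
    simpa [List.getD] using h 2 1 (by norm_num) (by norm_num) (by norm_num) (by norm_num)
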